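/- arXiv:2512.12415 — 2 statements merged into one kernel-verified Lean document; each statement's English description precedes it below -/
import Mathlib

section
/- Let V be a real vector space with complex structures I, J, K satisfying IJ = -JI = K, and let Ω be a complex bilinear form on V ⊗ ℂ of type (2,0) with respect to I, which is alternating, q-real (Ω(JX, JY) = conj(Ω(X̄, Ȳ))) and positive (Ω(Z, J Z̄) > 0 for nonzero (1,0)-vectors Z). Then g := 2 Re(Ω(·, J·)), restricted to V, is a positive definite symmetric bilinear form compatible with I, J, and K. -/
/-- From a q-positive form to a hyperhermitian metric: if `Ω` is an alternating complex
bilinear form on the complexification `W` of `V`, of type `(2,0)` with respect to `I`,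
q-real and positive, then `g := 2 Re (Ω(·, J·))`, restricted to the real points
(the fixed points of the conjugation `σ`), is a positive definite symmetric bilinear
form compatible with `I`, `J` and `K`. -/
theorem stmt_6 (W : Type*) [AddCommGroup W] [Module ℂ W]
    (I J K : Module.End ℂ W)
    (hI : I * I = -1) (hJ : J * J = -1) (hK : K * K = -1)
    (hIJ : I * J = K) (hJI : J * I = -K)
    (σ : W →ₛₗ[starRingEnd ℂ] W)
    (hσ : ∀ x, σ (σ x) = x)
    (hσI : ∀ x, σ (I x) = I (σ x))
    (hσJ : ∀ x, σ (J x) = J (σ x))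
    (hσK : ∀ x, σ (K x) = K (σ x))
    (Ω : W →ₗ[ℂ] W →ₗ[ℂ] ℂ)
    (halt : ∀ x, Ω x x = 0)
    (h20 : ∀ X Y : W, I X = -(Complex.I • X) → Ω X Y = 0)
    (hqreal : ∀ X Y : W, Ω (J X) (J Y) = starRingEnd ℂ (Ω (σ X) (σ Y)))
    (hpos : ∀ Z : W, Z ≠ 0 → I Z = Complex.I • Z →
      0 < (Ω Z (J (σ Z))).re ∧ (Ω Z (J (σ Z))).im = 0)
    (g : W → W → ℝ)
    (hg : ∀ x y, g x y = 2 * (Ω x (J y)).re) :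
    (∀ x y, σ x = x → σ y = y → g x y = g y x) ∧
    (∀ x, σ x = x → x ≠ 0 → 0 < g x x) ∧
    (∀ x y, σ x = x → σ y = y → g (I x) (I y) = g x y) ∧
    (∀ x y, σ x = x → σ y = y → g (J x) (J y) = g x y) ∧
    (∀ x y, σ x = x → σ y = y → g (K x) (K y) = g x y) := by
  classical
  -- pointwise versions of the algebra relations
  have hIIa : ∀ x, I (I x) = -x := by
    intro x
    have h := DFunLike.congr_fun hI x
    simpa [Module.End.mul_apply] using h
  have hJJa : ∀ x, J (J x) = -x := by
    intro x
    have h := DFunLike.congr_fun hJ x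
    simpa [Module.End.mul_apply] using h
  have hIJa : ∀ x, I (J x) = K x := by
    intro x
    have h := DFunLike.congr_fun hIJ x
    simpa [Module.End.mul_apply] using h
  have hJIa : ∀ x, J (I x) = -K x := by
    intro x
    have h := DFunLike.congr_fun hJI x
    simpa [Module.End.mul_apply] using h
  -- antisymmetry of Ω
  have hanti : ∀ x y, Ω x y = -Ω y x := by
    intro x y
    have h := halt (x + y)
    simp only [map_add, LinearMap.add_apply, halt x, halt y, zero_add, add_zero] at h
    linear_combination h
  -- Ω vanishes when the second argument is of type (0,1)
  have h20' : ∀ X Y : W, I Y = -(Complex.I • Y) → Ω X Y = 0 := by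
    intro X Y h
    rw [hanti, h20 Y X h, neg_zero]
  -- the (1,0) projection
  set p : W → W := fun x => (2⁻¹ : ℂ) • (x - Complex.I • I x) with hp
  have hIp : ∀ x, I (p x) = Complex.I • p x := by
    intro x
    simp only [hp, map_smul, map_sub, hIIa, smul_neg, sub_neg_eq_add]
    match_scalars
    all_goals (try (ring_nf; simp [Complex.I_sq])); all_goals ring_nf
  -- J maps (1,0) vectors to (0,1) vectors
  have hJ10 : ∀ Z : W, I Z = Complex.I • Z → I (J Z) = -(Complex.I • J Z) := by
    intro Z h
    rw [hIJa]
    have h2 := hJIa Z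
    rw [h, map_smul] at h2
    rw [eq_comm, neg_eq_iff_eq_neg, ← h2]
  -- σ maps (1,0) vectors to (0,1) vectors
  have hσ10 : ∀ Z : W, I Z = Complex.I • Z → I (σ Z) = -(Complex.I • σ Z) := by
    intro Z h
    rw [← hσI, h, map_smulₛₗ, Complex.conj_I, neg_smul]
  -- σ of the projection of a real vector
  have hσp : ∀ x, σ x = x → σ (p x) = x - p x := by
    intro x hx
    simp only [hp, map_smulₛₗ, map_sub, hσI, hx, Complex.conj_I, map_inv₀,
      Complex.conj_ofNat]
    match_scalars
    all_goals (try (ring_nf; simp [Complex.I_sq])); all_goals ring_nf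
  -- reduction of Ω x (J y) to the (1,0) parts
  have hreduce : ∀ x y, σ x = x → σ y = y → Ω x (J y) = Ω (p x) (J (σ (p y))) := by
    intro x y hx hy
    have hy' : y = p y + σ (p y) := by rw [hσp y hy]; abel
    have hx' : x = p x + σ (p x) := by rw [hσp x hx]; abel
    have h1 : Ω x (J y) = Ω x (J (σ (p y))) := by
      conv_lhs => rw [hy']
      rw [map_add, map_add, h20' x (J (p y)) (hJ10 _ (hIp y)), zero_add]
    rw [h1]
    conv_lhs => rw [hx']
    rw [map_add, LinearMap.add_apply, h20 (σ (p x)) _ (hσ10 _ (hIp x)), add_zero]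
  -- conjugation symmetry
  have hconj : ∀ Z Y : W, Ω Z (J (σ Y)) = starRingEnd ℂ (Ω Y (J (σ Z))) := by
    intro Z Y
    have h := hqreal (σ Y) (J Z)
    rw [hσ, hσJ, hJJa, map_neg] at h
    rw [hanti Z (J (σ Y)), ← map_neg, ← h, map_neg]
  -- the basic formula for g on real vectors
  have gform : ∀ x y, σ x = x → σ y = y →
      g x y = 2 * (Ω (p x) (J (σ (p y)))).re := by
    intro x y hx hy
    rw [hg, hreduce x y hx hy]
  -- behaviour of p under I and J
  have hpI : ∀ x, p (I x) = Complex.I • p x := by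
    intro x
    simp only [hp, hIIa, smul_neg]
    match_scalars
    all_goals (try (ring_nf; simp [Complex.I_sq])); all_goals ring_nf
  have hpJ : ∀ x, σ x = x → p (J x) = J (σ (p x)) := by
    intro x hx
    rw [hσp x hx]
    simp only [hp, map_sub, map_smul, hIJa, hJIa, smul_neg]
    module
  -- symmetry
  have hsym : ∀ x y, σ x = x → σ y = y → g x y = g y x := by
    intro x y hx hy
    rw [gform x y hx hy, gform y x hy hx, hconj (p x) (p y), Complex.conj_re]
  have hgI : ∀ x y, σ x = x → σ y = y → g (I x) (I y) = g x y := by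
    intro x y hx hy
    have hIx : σ (I x) = I x := by rw [hσI, hx]
    have hIy : σ (I y) = I y := by rw [hσI, hy]
    rw [gform _ _ hIx hIy, gform x y hx hy, hpI, hpI]
    have hσs : σ (Complex.I • p y) = -(Complex.I • σ (p y)) := by
      rw [map_smulₛₗ, Complex.conj_I, neg_smul]
    rw [hσs]
    simp only [map_smul, map_neg, LinearMap.smul_apply, LinearMap.neg_apply, smul_eq_mul]
    congr 1
    have hc : -(Complex.I * (Complex.I * Ω (p x) (J (σ (p y))))) = Ω (p x) (J (σ (p y))) := by
      linear_combination (-(Ω (p x) (J (σ (p y))))) * Complex.I_mul_I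
    rw [hc]
  have hgJ : ∀ x y, σ x = x → σ y = y → g (J x) (J y) = g x y := by
    intro x y hx hy
    have hJx : σ (J x) = J x := by rw [hσJ, hx]
    have hJy : σ (J y) = J y := by rw [hσJ, hy]
    rw [gform _ _ hJx hJy, hpJ x hx, hpJ y hy]
    have hσs : σ (J (σ (p y))) = J (p y) := by rw [hσJ, hσ]
    rw [hσs, hJJa, map_neg]
    rw [show -(Ω (J (σ (p x))) (p y)) = Ω (p y) (J (σ (p x))) from by
      rw [hanti (p y) (J (σ (p x)))]]
    rw [← gform y x hy hx, hsym x y hx hy]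
  refine ⟨hsym, ?_, hgI, hgJ, ?_⟩
  · -- positivity
    intro x hx hx0
    have hpx : p x ≠ 0 := by
      intro h0
      apply hx0
      have := hσp x hx
      rw [h0, map_zero, sub_zero] at this
      exact this.symm
    have := (hpos (p x) hpx (hIp x)).1
    rw [gform x x hx hx]
    linarith
  · -- compatibility with K
    intro x y hx hy
    have hJx : σ (J x) = J x := by rw [hσJ, hx]
    have hJy : σ (J y) = J y := by rw [hσJ, hy]
    rw [← hIJa x, ← hIJa y, hgI (J x) (J y) hJx hJy, hgJ x y hx hy]
end

section
/- Let A and B be n×n positive definite Hermitian matrices. Then tr(A⁻¹ B) ≤ (1/(n-1)!) · (tr(B⁻¹ A))^{n-1} · det(B)/det(A). -/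
open Matrix ComplexOrder

/-!
Write `A⁻¹B = S M S⁻¹` with `S = √(A⁻¹)` and `M = S B S` positive definite. If `μ₁, …, μₙ > 0`
are the eigenvalues of `M`, then `tr(A⁻¹B) = ∑ μᵢ`, `tr(B⁻¹A) = ∑ μᵢ⁻¹` and
`det B / det A = ∏ μᵢ`. Dividing by `∏ μᵢ`, the claim becomes
`(n-1)! · e_{n-1}(μ⁻¹) ≤ (∑ μᵢ⁻¹)^{n-1}`: every squarefree monomial of degree `n - 1` occurs in
the multinomial expansion of the right-hand side with coefficient `(n-1)!`, and all other terms
are nonnegative.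
-/

open Finset

open Nat in
theorem factorial_mul_sum_prod_erase_le_pow_sum {ι R : Type*} [DecidableEq ι] [CommSemiring R]
    [PartialOrder R] [IsOrderedRing R] (s : Finset ι) {y : ι → R} (hy : ∀ i ∈ s, 0 ≤ y i) :
    ((#s - 1)! : R) * ∑ i ∈ s, ∏ j ∈ s.erase i, y j ≤ (∑ i ∈ s, y i) ^ (#s - 1) := by
  classical
  set g : ι → ι → ℕ := fun i j => if j ∈ s.erase i then 1 else 0
  have hg_sum : ∀ i ∈ s, ∑ j ∈ s, g i j = #s - 1 := by
    intro i hi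
    rw [sum_boole, filter_mem_eq_inter, inter_eq_right.2 (erase_subset i s),
      card_erase_of_mem hi, Nat.cast_id]
  have hg_mem : ∀ i ∈ s, g i ∈ piAntidiag s (#s - 1) := fun i hi =>
    mem_piAntidiag.2 ⟨hg_sum i hi, fun j hj => mem_of_mem_erase (by simpa [g] using hj)⟩
  have hg_inj : Set.InjOn g s := by
    intro i hi i' hi' h
    by_contra hne
    exact (by simpa [g, hne] using congrFun h i : i ∉ s) hi
  have hterm : ∀ i ∈ s, ((#s - 1)! : R) * ∏ j ∈ s.erase i, y j
      = multinomial s (g i) * ∏ j ∈ s, y j ^ g i j := by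
    intro i hi
    have hfact : ∏ j ∈ s, (g i j)! = 1 := prod_eq_one fun j _ => by simp only [g]; split_ifs <;> rfl
    simp only [Nat.multinomial, hg_sum i hi, hfact, Nat.div_one, g, pow_ite, pow_one, pow_zero,
      prod_ite_mem, inter_eq_right.2 (erase_subset i s)]
  rw [sum_pow_eq_sum_piAntidiag, mul_sum]
  calc ∑ i ∈ s, ((#s - 1)! : R) * ∏ j ∈ s.erase i, y j
      = ∑ f ∈ s.image g, multinomial s f * ∏ j ∈ s, y j ^ f j := by
        rw [sum_image hg_inj]; exact sum_congr rfl hterm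
    _ ≤ _ := by
        refine sum_le_sum_of_subset_of_nonneg (image_subset_iff.2 hg_mem) fun f _ _ => ?_
        exact mul_nonneg (Nat.cast_nonneg _) (prod_nonneg fun j hj => pow_nonneg (hy j hj) _)

theorem sum_le_pow_sum_inv_mul_prod {ι : Type*} [Fintype ι] {μ : ι → ℝ} (hμ : ∀ i, 0 < μ i) :
    ∑ i, μ i ≤ 1 / (Fintype.card ι - 1).factorial * (∑ i, (μ i)⁻¹) ^ (Fintype.card ι - 1) *
      ∏ i, μ i := by
  classical
  have hprod : 0 < ∏ i, μ i := prod_pos fun i _ => hμ i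
  have hcofactor : ∀ i, ∏ j ∈ univ.erase i, (μ j)⁻¹ = μ i / ∏ j, μ j := fun i => by
    rw [prod_inv_distrib, ← mul_prod_erase univ μ (mem_univ i)]
    field_simp [(hμ i).ne']
  have key := factorial_mul_sum_prod_erase_le_pow_sum univ fun i _ => (inv_pos.2 (hμ i)).le
  simp only [hcofactor, ← sum_div, card_univ] at key
  calc ∑ i, μ i
      = (Fintype.card ι - 1).factorial * ((∑ i, μ i) / ∏ i, μ i) * (∏ i, μ i)
          / (Fintype.card ι - 1).factorial := by field_simp
    _ ≤ (∑ i, (μ i)⁻¹) ^ (Fintype.card ι - 1) * (∏ i, μ i) / (Fintype.card ι - 1).factorial := by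
        gcongr
    _ = _ := by ring

section

variable {𝕜 ι : Type*} [RCLike 𝕜] [Fintype ι] [DecidableEq ι]

theorem Matrix.IsHermitian.trace_cfc {A : Matrix ι ι 𝕜} (hA : A.IsHermitian) (f : ℝ → ℝ) :
    (cfc f A).trace = ∑ i, (f (hA.eigenvalues i) : 𝕜) := by
  rw [trace_eq_neg_charpoly_nextCoeff, hA.charpoly_cfc_eq, Polynomial.prod_X_sub_C_nextCoeff,
    neg_neg]

theorem Matrix.PosDef.trace_inv_eq_sum_inv_eigenvalues {A : Matrix ι ι 𝕜} (hA : A.PosDef) :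
    A⁻¹.trace = ∑ i, ((hA.isHermitian.eigenvalues i)⁻¹ : 𝕜) := by
  rw [nonsing_inv_eq_ringInverse,
    ← cfc_ringInverse_id (R := ℝ) A hA.isUnit hA.isHermitian.isSelfAdjoint,
    hA.isHermitian.trace_cfc]
  push_cast
  rfl

theorem Matrix.PosDef.re_trace_le_pow_re_trace_inv_mul_re_det {A : Matrix ι ι 𝕜} (hA : A.PosDef) :
    RCLike.re A.trace ≤ 1 / (Fintype.card ι - 1).factorial *
      (RCLike.re A⁻¹.trace) ^ (Fintype.card ι - 1) * RCLike.re A.det := by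
  rw [hA.isHermitian.trace_eq_sum_eigenvalues, hA.trace_inv_eq_sum_inv_eigenvalues,
    hA.isHermitian.det_eq_prod_eigenvalues]
  simp only [← RCLike.ofReal_inv, ← RCLike.ofReal_sum, ← RCLike.ofReal_prod, RCLike.ofReal_re]
  exact sum_le_pow_sum_inv_mul_prod hA.eigenvalues_pos

open scoped MatrixOrder in
theorem Matrix.PosDef.exists_inv_mul_eq_conj {A B : Matrix ι ι 𝕜} (hA : A.PosDef)
    (hB : B.PosDef) : ∃ S M : Matrix ι ι 𝕜, IsUnit S ∧ M.PosDef ∧ A⁻¹ * B = S * M * S⁻¹ := by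
  set S := CFC.sqrt A⁻¹
  have hS_sq : S * S = A⁻¹ := CFC.sqrt_mul_sqrt_self _ hA.inv.posSemidef.nonneg
  have hS_star : star S = S := (CFC.sqrt_nonneg A⁻¹).isSelfAdjoint
  have hS : IsUnit S := isUnit_of_mul_isUnit_left (by rw [hS_sq]; exact hA.inv.isUnit)
  refine ⟨S, S * B * S, hS, ?_, ?_⟩
  · simpa only [hS_star] using (Matrix.IsUnit.posDef_star_right_conjugate_iff hS).2 hB
  · simp only [Matrix.mul_assoc, Matrix.mul_nonsing_inv _ ((isUnit_iff_isUnit_det S).1 hS),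
      Matrix.mul_one]
    rw [← Matrix.mul_assoc, hS_sq]

end

theorem stmt_11_general (n : ℕ) (A B : Matrix (Fin n) (Fin n) ℂ)
    (hA : A.PosDef) (hB : B.PosDef) :
    (A⁻¹ * B).trace.re ≤
      (1 / (n - 1).factorial : ℝ) * ((B⁻¹ * A).trace.re) ^ (n - 1) *
        (B.det.re / A.det.re) := by
  obtain ⟨S, M, hS, hM, hAB⟩ := hA.exists_inv_mul_eq_conj hB
  have hBA : B⁻¹ * A = S * M⁻¹ * S⁻¹ := by
    have hA_det : IsUnit A.det := (isUnit_iff_isUnit_det A).1 hA.isUnit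
    have hS_det : IsUnit S.det := (isUnit_iff_isUnit_det S).1 hS
    rw [← nonsing_inv_nonsing_inv A hA_det, ← Matrix.mul_inv_rev, hAB, Matrix.mul_inv_rev,
      Matrix.mul_inv_rev, nonsing_inv_nonsing_inv S hS_det, Matrix.mul_assoc]
  have hdet : B.det = A.det * M.det := by
    rw [← det_conj hS M, ← hAB, det_mul, det_nonsing_inv, Ring.inverse_eq_inv,
      mul_inv_cancel_left₀ hA.det_pos.ne']
  have hratio : B.det.re / A.det.re = M.det.re := by
    obtain ⟨hA_re, hA_im⟩ := Complex.lt_def.1 hA.det_pos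
    rw [hdet, Complex.mul_re, ← hA_im, Complex.zero_im, zero_mul, sub_zero,
      mul_div_cancel_left₀ _ hA_re.ne']
  rw [hAB, hBA, trace_conj hS, trace_conj hS, hratio]
  simpa using hM.re_trace_le_pow_re_trace_inv_mul_re_det

/-- The mixed trace/determinant inequality: for positive definite Hermitian matrices
`A`, `B`, `tr(A⁻¹B) ≤ (1/(n-1)!) (tr(B⁻¹A))^{n-1} det B / det A`.  (All the quantities
involved are real, so the inequality is stated for the real parts.) -/
theorem stmt_11 (n : ℕ) (hn : 1 ≤ n) (A B : Matrix (Fin n) (Fin n) ℂ)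
    (hA : A.PosDef) (hB : B.PosDef) :
    (A⁻¹ * B).trace.re ≤
      (1 / (n - 1).factorial : ℝ) * ((B⁻¹ * A).trace.re) ^ (n - 1) *
        (B.det.re / A.det.re) :=
  stmt_11_general n A B hA hB
end
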